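/- arXiv:1710.10126 — 2 statements merged into one kernel-verified Lean document; each statement's English description precedes it below -/
import Mathlib

section
/- A lattice triangle in ℝ² has area strictly greater than 1/2 if and only if it contains a lattice point other than its three vertices (either on its boundary or in its interior). -/
/-!
Put `u = b - a`, `v = c - a` and `D = u.1 * v.2 - u.2 * v.1 ∈ ℤ`. The triangle is the image of the
standard triangle under `s ↦ a + s.1 • u + s.2 • v`, so its area is `|D| / 2`, and the area exceeds
`1 / 2` exactly when `D` is not a unit.

If `D = ±1`, Cramer's rule makes the coordinates `s` of a lattice point integers, so the point is
a vertex. Otherwise the lattice `ℤ u + ℤ v` is a proper subgroup of `ℤ²` (its generators would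
force `D ∣ 1`). Reducing a lattice point outside it modulo `ℤ u + ℤ v` lands in the half-open
parallelogram spanned by `u` and `v`, and the reflection `q ↦ u + v - q` moves it into the
triangle. Its class modulo `ℤ u + ℤ v` is not that of `0`, `u` or `v`, so translated by `a` it is
not a vertex.
-/
open MeasureTheory Set

def cross {R : Type*} [CommRing R] (u v : R × R) : R := u.1 * v.2 - u.2 * v.1

section Cross

variable {R : Type*} [CommRing R]

theorem cross_smul_add_smul_left (β γ : R) (u v : R × R) :
    cross (β • u + γ • v) v = β * cross u v := by
  simp only [cross, Prod.fst_add, Prod.snd_add, Prod.smul_fst, Prod.smul_snd, smul_eq_mul]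
  ring

theorem cross_smul_add_smul_right (β γ : R) (u v : R × R) :
    cross u (β • u + γ • v) = γ * cross u v := by
  simp only [cross, Prod.fst_add, Prod.snd_add, Prod.smul_fst, Prod.smul_snd, smul_eq_mul]
  ring

theorem cross_smul_add_smul (a b c d : R) (u v : R × R) :
    cross (a • u + b • v) (c • u + d • v) = (a * d - b * c) * cross u v := by
  simp only [cross, Prod.fst_add, Prod.snd_add, Prod.smul_fst, Prod.smul_snd, smul_eq_mul]
  ring

theorem isUnit_cross_of_span_eq_top {u v : R × R} (h : Submodule.span R {u, v} = ⊤) :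
    IsUnit (cross u v) := by
  obtain ⟨a, b, hab⟩ := Submodule.mem_span_pair.mp (h ▸ Submodule.mem_top : ((1, 0) : R × R) ∈ _)
  obtain ⟨c, d, hcd⟩ := Submodule.mem_span_pair.mp (h ▸ Submodule.mem_top : ((0, 1) : R × R) ∈ _)
  have : (a * d - b * c) * cross u v = 1 := by
    rw [← cross_smul_add_smul, hab, hcd]
    simp [cross]
  exact IsUnit.of_mul_eq_one_right _ this

theorem det_coprod_toSpanSingleton (u v : R × R) :
    LinearMap.det ((LinearMap.toSpanSingleton R _ u).coprod (LinearMap.toSpanSingleton R _ v)) =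
      cross u v := by
  rw [← LinearMap.det_toMatrix (Module.Basis.finTwoProd R), Matrix.det_fin_two]
  simp [LinearMap.toMatrix_apply, cross]
  ring

end Cross

theorem eq_smul_add_smul_of_cross_ne_zero {K : Type*} [Field K] {u v : K × K}
    (h : cross u v ≠ 0) (w : K × K) :
    w = (cross w v / cross u v) • u + (cross u w / cross u v) • v := by
  simp only [cross] at h ⊢
  ext <;>
  · simp only [Prod.fst_add, Prod.snd_add, Prod.smul_fst, Prod.smul_snd, smul_eq_mul]
    rw [div_mul_eq_mul_div, div_mul_eq_mul_div, ← add_div, eq_div_iff h]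
    ring

theorem collinear_of_cross_eq_zero {K : Type*} [Field K] {A B C : K × K}
    (h : cross (B - A) (C - A) = 0) : Collinear K ({A, B, C} : Set (K × K)) := by
  have hspan : vectorSpan K {A, B, C} = Submodule.span K {B - A, C - A} := by
    rw [vectorSpan_eq_span_vsub_set_right K (mem_insert A _)]
    simp [image_insert_eq, Submodule.span_insert_zero]
  have hne : Submodule.span K {B - A, C - A} ≠ ⊤ := fun htop =>
    (isUnit_cross_of_span_eq_top htop).ne_zero h
  have hlt := Submodule.finrank_lt hne
  rw [collinear_iff_finrank_le_one, hspan]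
  simp only [Module.finrank_prod, Module.finrank_self, Nat.reduceAdd, Order.lt_two_iff] at hlt
  omega

def stdTriangle : Set (ℝ × ℝ) := {s | 0 ≤ s.1 ∧ 0 ≤ s.2 ∧ s.1 + s.2 ≤ 1}

theorem measurableSet_stdTriangle : MeasurableSet stdTriangle :=
  (measurableSet_le measurable_const measurable_fst).inter <|
    (measurableSet_le measurable_const measurable_snd).inter <|
      measurableSet_le (measurable_fst.add measurable_snd) measurable_const

theorem volume_stdTriangle : volume stdTriangle = ENNReal.ofReal (1 / 2) := by
  have hsection : (fun x => volume (Prod.mk x ⁻¹' stdTriangle)) =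
      (Icc (0 : ℝ) 1).indicator (fun x => ENNReal.ofReal (1 - x)) := by
    funext x
    by_cases hx : x ∈ Icc (0 : ℝ) 1
    · have : Prod.mk x ⁻¹' stdTriangle = Icc 0 (1 - x) := by
        ext y
        simp only [stdTriangle, mem_preimage, mem_ofPred_eq, mem_Icc]
        constructor
        · rintro ⟨-, hy, hxy⟩
          exact ⟨hy, by linarith⟩
        · rintro ⟨hy, hxy⟩
          exact ⟨hx.1, hy, by linarith⟩
      rw [this, indicator_of_mem hx, Real.volume_Icc, sub_zero]
    · have : Prod.mk x ⁻¹' stdTriangle = ∅ := by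
        ext y
        simp only [stdTriangle, mem_preimage, mem_ofPred_eq, mem_empty_iff_false, iff_false]
        rintro ⟨h0, hy, hxy⟩
        exact hx ⟨h0, by linarith⟩
      rw [this, indicator_of_notMem hx, measure_empty]
  have hint : ∫ x in (0 : ℝ)..1, (1 - x) = 1 / 2 := by
    rw [intervalIntegral.integral_sub intervalIntegrable_const
      intervalIntegral.intervalIntegrable_id, integral_id]
    norm_num
  rw [Measure.volume_eq_prod, Measure.prod_apply measurableSet_stdTriangle, hsection,
    lintegral_indicator measurableSet_Icc, ← hint, intervalIntegral.integral_of_le zero_le_one,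
    ← integral_Icc_eq_integral_Ioc, ofReal_integral_eq_lintegral_ofReal]
  · exact (continuous_const.sub continuous_id).integrableOn_Icc
  · filter_upwards [self_mem_ae_restrict measurableSet_Icc] with x hx
    exact sub_nonneg.mpr hx.2

theorem convex_stdTriangle : Convex ℝ stdTriangle := by
  rintro x ⟨hx1, hx2, hx⟩ y ⟨hy1, hy2, hy⟩ s t hs ht hst
  simp only [stdTriangle, mem_ofPred_eq, Prod.fst_add, Prod.snd_add, Prod.smul_fst,
    Prod.smul_snd, smul_eq_mul]
  refine ⟨by positivity, by positivity, ?_⟩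
  nlinarith

theorem image_stdTriangle_eq {E : Type*} [AddCommGroup E] [Module ℝ E] (A u v : E) :
    (fun s : ℝ × ℝ => A + (s.1 • u + s.2 • v)) '' stdTriangle =
      (A + ·) '' ((LinearMap.toSpanSingleton ℝ E u).coprod (LinearMap.toSpanSingleton ℝ E v) ''
        stdTriangle) := by
  rw [image_image]
  rfl

theorem convexHull_triple_eq_image {E : Type*} [AddCommGroup E] [Module ℝ E] (A B C : E) :
    convexHull ℝ {A, B, C} =
      (fun s : ℝ × ℝ => A + (s.1 • (B - A) + s.2 • (C - A))) '' stdTriangle := by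
  apply Subset.antisymm
  · refine convexHull_min ?_ ?_
    · rintro x (rfl | rfl | rfl)
      · exact ⟨(0, 0), by norm_num [stdTriangle], by simp⟩
      · exact ⟨(1, 0), by norm_num [stdTriangle], by simp⟩
      · exact ⟨(0, 1), by norm_num [stdTriangle], by simp⟩
    · rw [image_stdTriangle_eq]
      exact (convex_stdTriangle.linear_image _).translate A
  · rintro _ ⟨s, ⟨hs1, hs2, hs⟩, rfl⟩
    have := (convex_convexHull ℝ {A, B, C}).sum_mem (t := Finset.univ)
      (w := ![1 - s.1 - s.2, s.1, s.2]) (z := ![A, B, C])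
      (by simp [Fin.forall_fin_succ]; exact ⟨by linarith, hs1, hs2⟩)
      (by simp [Fin.sum_univ_three]; ring)
      (fun i _ => subset_convexHull ℝ _ (by fin_cases i <;> simp))
    convert this using 1
    simp [Fin.sum_univ_three]
    module

theorem volume_convexHull_triple (A B C : ℝ × ℝ) :
    volume (convexHull ℝ {A, B, C}) = ENNReal.ofReal (|cross (B - A) (C - A)| / 2) := by
  rw [convexHull_triple_eq_image, image_stdTriangle_eq, image_add_left, measure_preimage_add,
    Measure.addHaar_image_linearMap, det_coprod_toSpanSingleton, volume_stdTriangle,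
    ← ENNReal.ofReal_mul (abs_nonneg _), mul_one_div]

def intPoint : ℤ × ℤ →+ ℝ × ℝ := (Int.castAddHom ℝ).prodMap (Int.castAddHom ℝ)

theorem intPoint_apply (p : ℤ × ℤ) : intPoint p = ((p.1 : ℝ), (p.2 : ℝ)) := rfl

theorem intPoint_injective : Function.Injective intPoint := fun p q h => by
  simp only [intPoint_apply, Prod.mk.injEq, Int.cast_inj] at h
  exact Prod.ext h.1 h.2

theorem cross_intPoint (u v : ℤ × ℤ) : cross (intPoint u) (intPoint v) = cross u v := by
  simp [cross, intPoint_apply]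

theorem intPoint_zsmul_add_zsmul (m n : ℤ) (u v : ℤ × ℤ) :
    intPoint (m • u + n • v) = (m : ℝ) • intPoint u + (n : ℝ) • intPoint v := by
  simp only [map_add, map_zsmul, Int.cast_smul_eq_zsmul]

theorem exists_intCast_eq_of_mul_isUnit {d k : ℤ} (hd : IsUnit d) {x : ℝ} (h : (k : ℝ) = x * d) :
    ∃ m : ℤ, x = m := by
  refine ⟨k * d, ?_⟩
  have : (d : ℝ) * d = 1 := by exact_mod_cast Int.isUnit_mul_self hd
  rw [Int.cast_mul, h, mul_assoc, this, mul_one]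

theorem eq_zero_or_eq_or_eq_of_isUnit_cross {u v q : ℤ × ℤ} (h : IsUnit (cross u v))
    {s : ℝ × ℝ} (hs : s ∈ stdTriangle) (hq : intPoint q = s.1 • intPoint u + s.2 • intPoint v) :
    q = 0 ∨ q = u ∨ q = v := by
  obtain ⟨m, hm⟩ : ∃ m : ℤ, s.1 = m := exists_intCast_eq_of_mul_isUnit h (k := cross q v) (by
    rw [← cross_intPoint, hq, cross_smul_add_smul_left, cross_intPoint])
  obtain ⟨n, hn⟩ : ∃ n : ℤ, s.2 = n := exists_intCast_eq_of_mul_isUnit h (k := cross u q) (by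
    rw [← cross_intPoint, hq, cross_smul_add_smul_right, cross_intPoint])
  have hq' : q = m • u + n • v := intPoint_injective (by rw [hq, hm, hn, intPoint_zsmul_add_zsmul])
  obtain ⟨hm0, hn0, hmn⟩ := hs
  rw [hm] at hm0 hmn
  rw [hn] at hn0 hmn
  norm_cast at hm0 hn0 hmn
  rcases (by omega : m = 0 ∧ n = 0 ∨ m = 1 ∧ n = 0 ∨ m = 0 ∧ n = 1) with
    ⟨rfl, rfl⟩ | ⟨rfl, rfl⟩ | ⟨rfl, rfl⟩ <;> simp [hq']

theorem exists_notMem_span_mem_stdTriangle_of_Ico {u v q : ℤ × ℤ}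
    (hq : q ∉ Submodule.span ℤ {u, v}) {x y : ℝ} (hx : x ∈ Ico 0 1) (hy : y ∈ Ico 0 1)
    (hxy : intPoint q = x • intPoint u + y • intPoint v) :
    ∃ q' ∉ Submodule.span ℤ {u, v}, ∃ s ∈ stdTriangle,
      intPoint q' = s.1 • intPoint u + s.2 • intPoint v := by
  by_cases hsum : x + y ≤ 1
  · exact ⟨q, hq, (x, y), ⟨hx.1, hy.1, hsum⟩, hxy⟩
  · refine ⟨u + v - q, fun hmem => hq ?_, (1 - x, 1 - y),
      ⟨by linarith [hx.2], by linarith [hy.2], by linarith⟩, ?_⟩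
    · have huv : u + v ∈ Submodule.span ℤ {u, v} := Submodule.mem_span_pair.mpr ⟨1, 1, by simp⟩
      simpa using Submodule.sub_mem _ huv hmem
    · rw [map_sub, map_add, hxy]
      module

theorem exists_notMem_span_mem_stdTriangle {u v : ℤ × ℤ} (h0 : cross u v ≠ 0)
    (hL : Submodule.span ℤ {u, v} ≠ ⊤) :
    ∃ q ∉ Submodule.span ℤ {u, v}, ∃ s ∈ stdTriangle,
      intPoint q = s.1 • intPoint u + s.2 • intPoint v := by
  obtain ⟨r, hr⟩ : ∃ r, r ∉ Submodule.span ℤ {u, v} := by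
    by_contra! hall
    exact hL (Submodule.eq_top_iff'.mpr hall)
  have h0' : cross (intPoint u) (intPoint v) ≠ 0 := by rwa [cross_intPoint, Int.cast_ne_zero]
  set β := cross (intPoint r) (intPoint v) / cross (intPoint u) (intPoint v)
  set γ := cross (intPoint u) (intPoint r) / cross (intPoint u) (intPoint v)
  have hrβγ : intPoint r = β • intPoint u + γ • intPoint v :=
    eq_smul_add_smul_of_cross_ne_zero h0' _
  refine exists_notMem_span_mem_stdTriangle_of_Ico (q := r - (⌊β⌋ • u + ⌊γ⌋ • v))
    (fun hmem => hr ?_) ⟨Int.fract_nonneg β, Int.fract_lt_one β⟩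
    ⟨Int.fract_nonneg γ, Int.fract_lt_one γ⟩ ?_
  · simpa using Submodule.add_mem _ hmem (Submodule.mem_span_pair.mpr ⟨⌊β⌋, ⌊γ⌋, rfl⟩)
  · rw [map_sub, intPoint_zsmul_add_zsmul, hrβγ, Int.fract, Int.fract]
    module

theorem mem_convexHull_intPoint_iff {a b c p : ℤ × ℤ} :
    intPoint p ∈ convexHull ℝ {intPoint a, intPoint b, intPoint c} ↔
      ∃ s ∈ stdTriangle, intPoint (p - a) = s.1 • intPoint (b - a) + s.2 • intPoint (c - a) := by
  simp only [convexHull_triple_eq_image, mem_image, map_sub, eq_sub_iff_add_eq', eq_comm]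

theorem exists_intPoint_mem_convexHull_ne_iff {a b c : ℤ × ℤ} (h0 : cross (b - a) (c - a) ≠ 0) :
    (∃ p, intPoint p ∈ convexHull ℝ {intPoint a, intPoint b, intPoint c} ∧
      p ≠ a ∧ p ≠ b ∧ p ≠ c) ↔ ¬IsUnit (cross (b - a) (c - a)) := by
  simp_rw [mem_convexHull_intPoint_iff]
  constructor
  · rintro ⟨p, ⟨s, hs, hp⟩, ha, hb, hc⟩ hunit
    rcases eq_zero_or_eq_or_eq_of_isUnit_cross hunit hs hp with h | h | h
    · exact ha (sub_eq_zero.mp h)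
    · exact hb (sub_left_inj.mp h)
    · exact hc (sub_left_inj.mp h)
  · intro hunit
    obtain ⟨q, hq, s, hs, hqs⟩ :=
      exists_notMem_span_mem_stdTriangle h0 (mt isUnit_cross_of_span_eq_top hunit)
    refine ⟨q + a, ⟨s, hs, by rwa [add_sub_cancel_right]⟩, ?_, ?_, ?_⟩ <;> intro hqa <;> apply hq
    · simp [add_eq_right.mp hqa]
    · exact Submodule.mem_span_pair.mpr ⟨1, 0, by simp [← hqa]⟩
    · exact Submodule.mem_span_pair.mpr ⟨0, 1, by simp [← hqa]⟩

/-- A lattice triangle has area strictly greater than 1/2 iff it contains a lattice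
point other than its three vertices. -/
theorem stmt_1 (a b c : ℤ × ℤ)
    (A B C : ℝ × ℝ)
    (hA : A = ((a.1 : ℝ), (a.2 : ℝ))) (hB : B = ((b.1 : ℝ), (b.2 : ℝ)))
    (hC : C = ((c.1 : ℝ), (c.2 : ℝ)))
    (hnd : ¬ Collinear ℝ ({A, B, C} : Set (ℝ × ℝ)))
    (T : Set (ℝ × ℝ)) (hT : T = convexHull ℝ ({A, B, C} : Set (ℝ × ℝ))) :
    1 / 2 < (volume T).toReal ↔
      ∃ p : ℤ × ℤ, ((p.1 : ℝ), (p.2 : ℝ)) ∈ T ∧ p ≠ a ∧ p ≠ b ∧ p ≠ c := by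
  subst hA hB hC hT
  simp_rw [← intPoint_apply] at hnd ⊢
  have hcross :
      cross (intPoint b - intPoint a) (intPoint c - intPoint a) = cross (b - a) (c - a) := by
    rw [← map_sub, ← map_sub, cross_intPoint]
  have h0 : cross (b - a) (c - a) ≠ 0 := fun h =>
    hnd (collinear_of_cross_eq_zero (by rw [hcross, h, Int.cast_zero]))
  rw [exists_intPoint_mem_convexHull_ne_iff h0, volume_convexHull_triple, hcross,
    ENNReal.toReal_ofReal (by positivity), Int.isUnit_iff_abs_eq, ← Int.cast_abs,
    div_lt_div_iff_of_pos_right two_pos, ← Int.cast_one, Int.cast_lt]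
  have := abs_pos.mpr h0
  omega
end

section
/- Let f be a continuous piecewise linear function with integer slopes on a metric graph Σ (a compact connected metric space built from finitely many intervals). Then the divisor div(f), assigning to each point the sum of incoming slopes of f at that point, has total degree 0. -/
open Finset

/-- The divisor of a piecewise linear function on a metric graph has degree 0.
Model: a metric graph with vertex set V and edges E glued at endpoints via `ends`;
on edge e the function is piecewise linear with `n e` segments of integer slopes
`s e 0, …, s e (n e - 1)` (read from the first endpoint to the second). The divisor
assigns to each point the sum of outgoing slopes: at an interior breakpoint of an edge
this is the difference of consecutive slopes; at a vertex it is the sum of the slopes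
leaving into the incident edges. The total degree is zero. -/
theorem stmt_17 (V E : Type*) [Fintype V] [Fintype E] [DecidableEq V]
    (ends : E → V × V) (n : E → ℕ) (hn : ∀ e, 1 ≤ n e) (s : E → ℕ → ℤ) :
    (∑ e : E, ∑ i ∈ Finset.range (n e - 1), (s e (i + 1) - s e i)) +
      (∑ v : V,
        ((∑ e ∈ univ.filter fun e : E => (ends e).1 = v, s e 0) -
         (∑ e ∈ univ.filter fun e : E => (ends e).2 = v, s e (n e - 1)))) = 0 := by
  have h1 : (∑ e : E, ∑ i ∈ Finset.range (n e - 1), (s e (i + 1) - s e i)) =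
      ∑ e : E, (s e (n e - 1) - s e 0) := by
    refine Finset.sum_congr rfl fun e _ => ?_
    rw [Finset.sum_range_sub (fun i => s e i)]
  have h2 : (∑ v : V, ∑ e ∈ univ.filter fun e : E => (ends e).1 = v, s e 0) =
      ∑ e : E, s e 0 := by
    rw [← Finset.sum_fiberwise univ (fun e => (ends e).1) (fun e => s e 0)]
  have h3 : (∑ v : V, ∑ e ∈ univ.filter fun e : E => (ends e).2 = v, s e (n e - 1)) =
      ∑ e : E, s e (n e - 1) := by
    rw [← Finset.sum_fiberwise univ (fun e => (ends e).2) (fun e => s e (n e - 1))]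
  rw [h1]
  simp only [Finset.sum_sub_distrib]
  rw [h2, h3]
  ring
end
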